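/- arXiv:1311.2279 — 2 statements merged into one kernel-verified Lean document; each statement's English description precedes it below -/
import Mathlib

section
/- Let F : [0,1]² → ℝ be continuous and strictly increasing in each variable separately. Let S ⊆ [0,1] be dense with 0, 1 ∈ S, and let u, v : S → [0,1] be increasing functions satisfying F(u(t), v(t)) = t for all t ∈ S. Then u and v extend uniquely to continuous increasing functions on [0,1] satisfying F(u(t), v(t)) = t for all t ∈ [0,1]. -/
/-!
Extend `u` and `v` monotonically to `ℝ`, constant outside `[0, 1]`. At any `t₀` the left and right
limits `(a, α) ≤ (b, β)` of the extensions, taken along the dense set where the equation holds,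
both satisfy `F = t₀` by continuity of `F`; strict monotonicity of `F` in each variable then
forces `a = b` and `α = β`, so the extensions have no jumps. The equation on `[0, 1]` and
uniqueness then follow from continuity and density of `S`.
-/

open Set Filter Topology Function

section StrictMonoEquation

variable {s : Set ℝ} {F : ℝ → ℝ → ℝ}

theorem eq_and_eq_of_apply_eq_of_le (hF1 : ∀ y ∈ s, StrictMonoOn (F · y) s)
    (hF2 : ∀ x ∈ s, StrictMonoOn (F x) s) {a b α β : ℝ} (ha : a ∈ s) (hb : b ∈ s)
    (hα : α ∈ s) (hβ : β ∈ s) (hab : a ≤ b) (hαβ : α ≤ β) (h : F a α = F b β) :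
    a = b ∧ α = β := by
  have hmono₁ : F a α ≤ F b α := (hF1 α hα).monotoneOn ha hb hab
  have hmono₂ : F b α ≤ F b β := (hF2 b hb).monotoneOn hα hβ hαβ
  constructor
  · refine hab.eq_of_not_lt fun hlt => ?_
    exact ((hF1 α hα ha hb hlt).trans_le hmono₂).ne h
  · refine hαβ.eq_of_not_lt fun hlt => ?_
    exact (hmono₁.trans_lt (hF2 b hb hα hβ hlt)).ne h

theorem apply_eq_of_tendsto {l : Filter ℝ} [l.NeBot] (hs : IsClosed s)
    (hFc : ContinuousOn (uncurry F) (s ×ˢ s)) {f g φ : ℝ → ℝ} {a α c : ℝ}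
    (hfs : ∀ᶠ t in l, f t ∈ s) (hgs : ∀ᶠ t in l, g t ∈ s)
    (hf : Tendsto f l (𝓝 a)) (hg : Tendsto g l (𝓝 α)) (hφ : Tendsto φ l (𝓝 c))
    (heq : ∀ᶠ t in l, F (f t) (g t) = φ t) : F a α = c := by
  have ha : a ∈ s := hs.mem_of_tendsto hf hfs
  have hα : α ∈ s := hs.mem_of_tendsto hg hgs
  have hpair : Tendsto (fun t => (f t, g t)) l (𝓝[s ×ˢ s] (a, α)) :=
    tendsto_nhdsWithin_iff.2 ⟨hf.prodMk_nhds hg, hfs.and hgs⟩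
  exact tendsto_nhds_unique ((hFc _ ⟨ha, hα⟩).tendsto.comp hpair)
    (hφ.congr' (heq.mono fun _ => Eq.symm))

theorem Dense.nhdsWithin_inter_neBot {X : Type*} [TopologicalSpace X] {T U : Set X}
    (hT : Dense T) (hU : IsOpen U) {x : X} [(𝓝[U] x).NeBot] : (𝓝[U ∩ T] x).NeBot :=
  mem_closure_iff_nhdsWithin_neBot.1 <| closure_minimal (hT.open_subset_closure_inter hU)
    isClosed_closure (mem_closure_iff_nhdsWithin_neBot.2 ‹_›)

theorem Monotone.continuous_of_apply_eq (hs : IsClosed s)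
    (hFc : ContinuousOn (uncurry F) (s ×ˢ s)) (hF1 : ∀ y ∈ s, StrictMonoOn (F · y) s)
    (hF2 : ∀ x ∈ s, StrictMonoOn (F x) s) {f g φ : ℝ → ℝ} (hf : Monotone f) (hg : Monotone g)
    (hfs : ∀ t, f t ∈ s) (hgs : ∀ t, g t ∈ s) {T : Set ℝ} (hT : Dense T) (hφ : Continuous φ)
    (heq : ∀ t ∈ T, F (f t) (g t) = φ t) : Continuous f ∧ Continuous g := by
  have hside {U : Set ℝ} (hU : IsOpen U) (t₀ : ℝ) [(𝓝[U] t₀).NeBot] {a α : ℝ}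
      (ha : Tendsto f (𝓝[U] t₀) (𝓝 a)) (hα : Tendsto g (𝓝[U] t₀) (𝓝 α)) : F a α = φ t₀ := by
    have := hT.nhdsWithin_inter_neBot hU (x := t₀)
    have hle : 𝓝[U ∩ T] t₀ ≤ 𝓝[U] t₀ := nhdsWithin_mono _ inter_subset_left
    exact apply_eq_of_tendsto hs hFc (.of_forall hfs) (.of_forall hgs) (ha.mono_left hle)
      (hα.mono_left hle) ((hφ.tendsto t₀).mono_left nhdsWithin_le_nhds)
      (eventually_mem_nhdsWithin.mono fun t ht => heq t ht.2)
  have hlim (t₀ : ℝ) : leftLim f t₀ = rightLim f t₀ ∧ leftLim g t₀ = rightLim g t₀ := by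
    have hfl := hf.tendsto_leftLim t₀
    have hgl := hg.tendsto_leftLim t₀
    have hfr := hf.tendsto_rightLim t₀
    have hgr := hg.tendsto_rightLim t₀
    refine eq_and_eq_of_apply_eq_of_le hF1 hF2 (hs.mem_of_tendsto hfl (.of_forall hfs))
      (hs.mem_of_tendsto hfr (.of_forall hfs)) (hs.mem_of_tendsto hgl (.of_forall hgs))
      (hs.mem_of_tendsto hgr (.of_forall hgs)) (hf.leftLim_le_rightLim le_rfl)
      (hg.leftLim_le_rightLim le_rfl) ?_
    rw [hside isOpen_Iio t₀ hfl hgl, hside isOpen_Ioi t₀ hfr hgr]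
  exact ⟨continuous_iff_continuousAt.2 fun t => hf.continuousAt_iff_leftLim_eq_rightLim.2 (hlim t).1,
    continuous_iff_continuousAt.2 fun t => hg.continuousAt_iff_leftLim_eq_rightLim.2 (hlim t).2⟩

end StrictMonoEquation

section ClampedExtension

variable {α : Type*} [LinearOrder α] {a b : α} {S : Set α}

theorem MonotoneOn.exists_monotone_extension_projIcc {β : Type*}
    [ConditionallyCompleteLinearOrder β] (hab : a ≤ b) {u : α → β} (hu : MonotoneOn u S)
    (hS : S ⊆ Icc a b) (ha : a ∈ S) (hb : b ∈ S) :
    ∃ U : α → β, Monotone U ∧ EqOn u U S ∧ (∀ t, U t ∈ Icc (u a) (u b)) ∧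
      ∀ t, U (projIcc a b hab t) = U t := by
  obtain ⟨g, hg, hgS⟩ := hu.exists_monotone_extension
    ⟨u a, by rintro _ ⟨t, ht, rfl⟩; exact hu ha ht (hS ht).1⟩
    ⟨u b, by rintro _ ⟨t, ht, rfl⟩; exact hu ht hb (hS ht).2⟩
  refine ⟨fun t => g (projIcc a b hab t),
    hg.comp ((Subtype.mono_coe _).comp (monotone_projIcc hab)), fun t ht => ?_, fun t => ?_,
    fun t => by simp only [projIcc_val]⟩
  · simp only [projIcc_of_mem hab (hS ht), hgS ht]
  · rw [hgS ha, hgS hb]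
    exact ⟨hg (projIcc a b hab t).2.1, hg (projIcc a b hab t).2.2⟩

theorem dense_preimage_projIcc [TopologicalSpace α] (hab : a ≤ b) (hS : S ⊆ Icc a b)
    (hdense : Icc a b ⊆ closure S) (ha : a ∈ S) (hb : b ∈ S) :
    Dense ((fun t => (projIcc a b hab t : α)) ⁻¹' S) := by
  intro x
  by_cases hx : x ∈ Icc a b
  · refine closure_mono (fun t ht => ?_) (hdense hx)
    rwa [mem_preimage, projIcc_of_mem hab (hS ht)]
  · refine subset_closure ?_
    rcases not_and_or.1 hx with hxa | hxb
    · rwa [mem_preimage, projIcc_of_le_left hab (not_le.1 hxa).le]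
    · rwa [mem_preimage, projIcc_of_right_le hab (not_le.1 hxb).le]

end ClampedExtension

/-- Increasing solutions of F(u(t),v(t)) = t on a dense subset extend uniquely to
continuous increasing solutions on [0,1]. -/
theorem extend_to_continuous
    (F : ℝ → ℝ → ℝ)
    (hFc : ContinuousOn (fun q : ℝ × ℝ => F q.1 q.2) (Set.Icc (0:ℝ) 1 ×ˢ Set.Icc (0:ℝ) 1))
    (hF1 : ∀ τ ∈ Set.Icc (0:ℝ) 1, StrictMonoOn (fun t => F t τ) (Set.Icc (0:ℝ) 1))
    (hF2 : ∀ t ∈ Set.Icc (0:ℝ) 1, StrictMonoOn (fun τ => F t τ) (Set.Icc (0:ℝ) 1))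
    (S : Set ℝ) (hS : S ⊆ Set.Icc (0:ℝ) 1) (hdense : ∀ x ∈ Set.Icc (0:ℝ) 1, x ∈ closure S)
    (h0S : (0:ℝ) ∈ S) (h1S : (1:ℝ) ∈ S)
    (u v : ℝ → ℝ)
    (hu : MonotoneOn u S) (hv : MonotoneOn v S)
    (humaps : MapsTo u S (Set.Icc (0:ℝ) 1)) (hvmaps : MapsTo v S (Set.Icc (0:ℝ) 1))
    (hnorm : ∀ t ∈ S, F (u t) (v t) = t) :
    ∃ U V : ℝ → ℝ,
      ContinuousOn U (Set.Icc (0:ℝ) 1) ∧ ContinuousOn V (Set.Icc (0:ℝ) 1) ∧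
      MonotoneOn U (Set.Icc (0:ℝ) 1) ∧ MonotoneOn V (Set.Icc (0:ℝ) 1) ∧
      MapsTo U (Set.Icc (0:ℝ) 1) (Set.Icc (0:ℝ) 1) ∧
      MapsTo V (Set.Icc (0:ℝ) 1) (Set.Icc (0:ℝ) 1) ∧
      (∀ t ∈ S, U t = u t ∧ V t = v t) ∧
      (∀ t ∈ Set.Icc (0:ℝ) 1, F (U t) (V t) = t) ∧
      (∀ U' V' : ℝ → ℝ,
        ContinuousOn U' (Set.Icc (0:ℝ) 1) → ContinuousOn V' (Set.Icc (0:ℝ) 1) →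
        (∀ t ∈ S, U' t = u t ∧ V' t = v t) →
        ∀ t ∈ Set.Icc (0:ℝ) 1, U' t = U t ∧ V' t = V t) := by
  obtain ⟨U, hUmono, hUS, hUmem, hUproj⟩ :=
    hu.exists_monotone_extension_projIcc zero_le_one hS h0S h1S
  obtain ⟨V, hVmono, hVS, hVmem, hVproj⟩ :=
    hv.exists_monotone_extension_projIcc zero_le_one hS h0S h1S
  have hU01 (t : ℝ) : U t ∈ Icc (0:ℝ) 1 :=
    Icc_subset_Icc (humaps h0S).1 (humaps h1S).2 (hUmem t)
  have hV01 (t : ℝ) : V t ∈ Icc (0:ℝ) 1 :=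
    Icc_subset_Icc (hvmaps h0S).1 (hvmaps h1S).2 (hVmem t)
  -- Clamping to `[0, 1]` makes the equation hold on a set dense in all of `ℝ`.
  obtain ⟨hUc, hVc⟩ := Monotone.continuous_of_apply_eq isClosed_Icc hFc hF1 hF2 hUmono hVmono
    hU01 hV01 (dense_preimage_projIcc zero_le_one hS hdense h0S h1S)
    (φ := fun t => (projIcc 0 1 zero_le_one t : ℝ))
    (continuous_subtype_val.comp (continuous_projIcc (h := zero_le_one))) fun t ht => by
      rw [← hUproj, ← hVproj, ← hUS ht, ← hVS ht, hnorm _ ht]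
  have hFUV : ContinuousOn (fun t => F (U t) (V t)) (Icc 0 1) :=
    (hFc.comp_continuous (hUc.prodMk hVc) fun t => ⟨hU01 t, hV01 t⟩).continuousOn
  refine ⟨U, V, hUc.continuousOn, hVc.continuousOn, hUmono.monotoneOn _, hVmono.monotoneOn _,
    fun t _ => hU01 t, fun t _ => hV01 t, fun t ht => ⟨(hUS ht).symm, (hVS ht).symm⟩,
    ?_, ?_⟩
  · refine EqOn.of_subset_closure (fun t ht => ?_) hFUV continuousOn_id hS hdense
    rw [← hUS ht, ← hVS ht, hnorm t ht]
  · intro U' V' hU' hV' hext t ht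
    exact ⟨EqOn.of_subset_closure (fun s hs => (hext s hs).1.trans (hUS hs)) hU'
        hUc.continuousOn hS hdense ht,
      EqOn.of_subset_closure (fun s hs => (hext s hs).2.trans (hVS hs)) hV'
        hVc.continuousOn hS hdense ht⟩
end

section
/- Let F : [0,1]² → ℝ be increasing in the first variable. Suppose there exist ε ∈ (0,1) and δ > 0 such that for all 0 ≤ s < s' ≤ 1 and 0 ≤ τ < τ' ≤ 1 with s' − s < δ and τ' − τ < δ, one has (F(s', τ) − F(s, τ)) ≤ (1+ε)(F(s', τ') − F(s, τ')). Let u, v : [0,1] → [0,1] be increasing with moduli |u(a) − u(b)|, |v(a) − v(b)| < δ whenever |a − b| < μ for some μ > 0. Let Z be a partition of [0,1] with mesh < μ and Z' a refinement of Z with mesh < μ. Then S₁(u, v, 1, Z) ≤ (1+ε) S₁(u, v, 1, Z'), where S₁(u,v,1,W) = Σ over consecutive points w_j < w_{j+1} of W of [F(u(w_{j+1}), v(w_j)) − F(u(w_j), v(w_j))]. -/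
open Set Finset

/-- S₁-sum for a partition given by points `p : Fin (s+1) → ℝ`. -/
noncomputable def S1sum (F : ℝ → ℝ → ℝ) (u v : ℝ → ℝ) {s : ℕ} (p : Fin (s + 1) → ℝ) : ℝ :=
  ∑ l : Fin s, (F (u (p l.succ)) (v (p l.castSucc)) - F (u (p l.castSucc)) (v (p l.castSucc)))

def IsPartitionOf {s : ℕ} (p : Fin (s + 1) → ℝ) (t : ℝ) : Prop :=
  StrictMono p ∧ p 0 = 0 ∧ p (Fin.last s) = t

def MeshLt {s : ℕ} (p : Fin (s + 1) → ℝ) (μ : ℝ) : Prop :=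
  ∀ l : Fin s, p l.succ - p l.castSucc < μ

/-!
Each coarse increment `F (u Z₍ⱼ₊₁₎) (v Zⱼ) - F (u Zⱼ) (v Zⱼ)` telescopes over the fine points
`Z'ₖ` between `Zⱼ` and `Zⱼ₊₁`, with the second argument frozen at `v Zⱼ`. All these points lie in
one coarse interval, of length `< μ`, so the moduli of `u` and `v` make the ratio hypothesis
applicable to each frozen fine increment: it is at most `(1 + ε)` times the same increment with
second argument `v Z'ₖ`. When `u` or `v` is constant across the relevant points, the bound follows
instead from the monotonicity of `F` in its first variable. Summing over the blocks of fine
intervals gives the estimate.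
-/

theorem Finset.sum_range_sum_Ico_eq_sum_Ico {M : Type*} [AddCommMonoid M] (f : ℕ → M)
    {n : ℕ → ℕ} (hn : Monotone n) (m : ℕ) :
    ∑ j ∈ range m, ∑ k ∈ Ico (n j) (n (j + 1)), f k = ∑ k ∈ Ico (n 0) (n m), f k := by
  induction m with
  | zero => simp
  | succ m ih =>
    rw [sum_range_succ, ih, sum_Ico_consecutive _ (hn m.zero_le) (hn m.le_succ)]

theorem Fin.clamp_val_eq_self {n : ℕ} (i : Fin (n + 1)) : Fin.clamp i n = i :=
  Fin.ext (min_eq_left i.is_le)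

theorem Fin.clamp_val_castSucc {s : ℕ} (l : Fin s) : Fin.clamp l s = l.castSucc :=
  Fin.clamp_val_eq_self l.castSucc

theorem Fin.clamp_val_add_one {s : ℕ} (l : Fin s) : Fin.clamp (l + 1) s = l.succ :=
  Fin.clamp_val_eq_self l.succ

theorem S1sum_eq_sum_range (F : ℝ → ℝ → ℝ) (u v : ℝ → ℝ) {s : ℕ} (p : Fin (s + 1) → ℝ) :
    S1sum F u v p = ∑ k ∈ range s, (F (u (p (Fin.clamp (k + 1) s))) (v (p (Fin.clamp k s)))
      - F (u (p (Fin.clamp k s))) (v (p (Fin.clamp k s)))) := by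
  rw [S1sum, ← Fin.sum_univ_eq_sum_range]
  refine sum_congr rfl fun l _ => ?_
  rw [Fin.clamp_val_add_one, Fin.clamp_val_castSucc]

theorem sum_range_le_mul_sum_Ico_of_blocks (G : ℝ → ℝ → ℝ) (x : ℕ → ℝ) {n : ℕ → ℕ}
    (hn : Monotone n) (m : ℕ) (c : ℝ)
    (hblock : ∀ j < m, ∀ k ∈ Finset.Ico (n j) (n (j + 1)),
      G (x (k + 1)) (x (n j)) - G (x k) (x (n j)) ≤ c * (G (x (k + 1)) (x k) - G (x k) (x k))) :
    ∑ j ∈ range m, (G (x (n (j + 1))) (x (n j)) - G (x (n j)) (x (n j)))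
      ≤ c * ∑ k ∈ Ico (n 0) (n m), (G (x (k + 1)) (x k) - G (x k) (x k)) := by
  rw [← sum_range_sum_Ico_eq_sum_Ico _ hn, mul_sum]
  refine sum_le_sum fun j hj => ?_
  rw [← sum_Ico_sub (fun k => G (x k) (x (n j))) (hn j.le_succ), mul_sum]
  exact sum_le_sum (hblock j (mem_range.mp hj))

theorem S1sum_le_mul_S1sum_of_refines (F : ℝ → ℝ → ℝ) (u v : ℝ → ℝ) (c : ℝ) {m m' : ℕ}
    {Z : Fin (m + 1) → ℝ} {Z' : Fin (m' + 1) → ℝ} {φ : Fin (m + 1) → Fin (m' + 1)}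
    (hφ : Monotone φ) (hφ0 : φ 0 = 0) (hφlast : φ (Fin.last m) = Fin.last m')
    (hZ : ∀ j, Z' (φ j) = Z j)
    (hblock : ∀ (j : Fin m) (k : Fin m'), φ j.castSucc ≤ k.castSucc → k.succ ≤ φ j.succ →
      F (u (Z' k.succ)) (v (Z j.castSucc)) - F (u (Z' k.castSucc)) (v (Z j.castSucc))
        ≤ c * (F (u (Z' k.succ)) (v (Z' k.castSucc)) - F (u (Z' k.castSucc)) (v (Z' k.castSucc)))) :
    S1sum F u v Z ≤ c * S1sum F u v Z' := by
  set x : ℕ → ℝ := fun k => Z' (Fin.clamp k m')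
  set n : ℕ → ℕ := fun j => φ (Fin.clamp j m)
  have hx : ∀ j, Z (Fin.clamp j m) = x (n j) := fun j => by
    simp only [x, n, Fin.clamp_val_eq_self, hZ]
  have hn : Monotone n := fun a b h => hφ (Fin.clamp_monotone h)
  have hn0 : n 0 = 0 := by
    simp only [n, show Fin.clamp 0 m = 0 from Fin.clamp_val_eq_self 0, hφ0, Fin.val_zero]
  have hnm : n m = m' := by simp only [n, Fin.clamp_eq_last m m le_rfl, hφlast, Fin.val_last]
  rw [S1sum_eq_sum_range, S1sum_eq_sum_range]
  simp only [hx, show ∀ k, Z' (Fin.clamp k m') = x k from fun _ => rfl]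
  refine (sum_range_le_mul_sum_Ico_of_blocks (fun a b => F (u a) (v b)) x hn m c
    fun j hj k hk => ?_).trans_eq (by rw [hn0, hnm, range_eq_Ico])
  obtain ⟨hjk, hkj⟩ := mem_Ico.mp hk
  obtain ⟨j, rfl⟩ : ∃ j' : Fin m, ↑j' = j := ⟨⟨j, hj⟩, rfl⟩
  obtain ⟨k, rfl⟩ : ∃ k' : Fin m', ↑k' = k := ⟨⟨k, hkj.trans_le (φ _).is_le⟩, rfl⟩
  simp only [n, x, Fin.clamp_val_castSucc, Fin.clamp_val_add_one, Fin.clamp_val_eq_self, hZ]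
    at hjk hkj ⊢
  exact hblock j k hjk hkj

def IncrementRatioBound (F : ℝ → ℝ → ℝ) (c δ : ℝ) : Prop :=
  ∀ s s' τ τ' : ℝ, 0 ≤ s → s < s' → s' ≤ 1 → 0 ≤ τ → τ < τ' → τ' ≤ 1 →
    s' - s < δ → τ' - τ < δ → F s' τ - F s τ ≤ c * (F s' τ' - F s τ')

theorem sub_le_mul_sub_of_incrementRatioBound {F : ℝ → ℝ → ℝ} {c δ : ℝ} (hc : 1 ≤ c)
    (hFmono : ∀ τ ∈ Icc (0:ℝ) 1, MonotoneOn (fun t => F t τ) (Icc (0:ℝ) 1))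
    (hratio : IncrementRatioBound F c δ) {s s' τ τ' : ℝ} (hs : s ∈ Icc (0:ℝ) 1)
    (hs' : s' ∈ Icc (0:ℝ) 1) (hss' : s ≤ s') (hτ : τ ∈ Icc (0:ℝ) 1) (hτ' : τ' ∈ Icc (0:ℝ) 1)
    (hττ' : τ ≤ τ') (hsδ : s' - s < δ) (hτδ : τ' - τ < δ) :
    F s' τ - F s τ ≤ c * (F s' τ' - F s τ') := by
  rcases hss'.eq_or_lt with rfl | hss'
  · simp
  rcases hττ'.eq_or_lt with rfl | hττ'
  · exact le_mul_of_one_le_left (sub_nonneg.mpr (hFmono τ hτ hs hs' hss'.le)) hc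
  · exact hratio s s' τ τ' hs.1 hss' hs'.2 hτ.1 hττ' hτ'.2 hsδ hτδ

theorem frozen_increment_le {F : ℝ → ℝ → ℝ} {c δ μ : ℝ} {u v : ℝ → ℝ} (hc : 1 ≤ c)
    (hFmono : ∀ τ ∈ Icc (0:ℝ) 1, MonotoneOn (fun t => F t τ) (Icc (0:ℝ) 1))
    (hratio : IncrementRatioBound F c δ)
    (hu : MonotoneOn u (Icc (0:ℝ) 1)) (hv : MonotoneOn v (Icc (0:ℝ) 1))
    (humaps : MapsTo u (Icc (0:ℝ) 1) (Icc (0:ℝ) 1))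
    (hvmaps : MapsTo v (Icc (0:ℝ) 1) (Icc (0:ℝ) 1))
    (hmodu : ∀ a ∈ Icc (0:ℝ) 1, ∀ b ∈ Icc (0:ℝ) 1, |a - b| < μ →
      |u a - u b| < δ ∧ |v a - v b| < δ)
    {t₀ t₁ t₂ : ℝ} (h₀ : t₀ ∈ Icc (0:ℝ) 1) (h₂ : t₂ ∈ Icc (0:ℝ) 1) (h₀₁ : t₀ ≤ t₁)
    (h₁₂ : t₁ ≤ t₂) (hμ : t₂ - t₀ < μ) :
    F (u t₂) (v t₀) - F (u t₁) (v t₀) ≤ c * (F (u t₂) (v t₁) - F (u t₁) (v t₁)) := by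
  have h₁ : t₁ ∈ Icc (0:ℝ) 1 := ⟨h₀.1.trans h₀₁, h₁₂.trans h₂.2⟩
  have hu₁₂ : u t₂ - u t₁ < δ := (le_abs_self _).trans_lt
    (hmodu t₂ h₂ t₁ h₁ (abs_sub_lt_iff.mpr ⟨by linarith, by linarith⟩)).1
  have hv₀₁ : v t₁ - v t₀ < δ := (le_abs_self _).trans_lt
    (hmodu t₁ h₁ t₀ h₀ (abs_sub_lt_iff.mpr ⟨by linarith, by linarith⟩)).2
  exact sub_le_mul_sub_of_incrementRatioBound hc hFmono hratio (humaps h₁) (humaps h₂)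
    (hu h₁ h₂ h₁₂) (hvmaps h₀) (hvmaps h₁) (hv h₀ h₁ h₀₁) hu₁₂ hv₀₁

theorem S1_refinement_comparison_general
    (F : ℝ → ℝ → ℝ)
    (hFmono : ∀ τ ∈ Set.Icc (0:ℝ) 1, MonotoneOn (fun t => F t τ) (Set.Icc (0:ℝ) 1))
    (ε δ : ℝ) (hε : ε ∈ Set.Ioo (0:ℝ) 1)
    (hratio : ∀ s s' τ τ' : ℝ, 0 ≤ s → s < s' → s' ≤ 1 → 0 ≤ τ → τ < τ' → τ' ≤ 1 →
      s' - s < δ → τ' - τ < δ →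
      F s' τ - F s τ ≤ (1 + ε) * (F s' τ' - F s τ'))
    (u v : ℝ → ℝ)
    (hu : MonotoneOn u (Set.Icc (0:ℝ) 1)) (hv : MonotoneOn v (Set.Icc (0:ℝ) 1))
    (humaps : MapsTo u (Set.Icc (0:ℝ) 1) (Set.Icc (0:ℝ) 1))
    (hvmaps : MapsTo v (Set.Icc (0:ℝ) 1) (Set.Icc (0:ℝ) 1))
    (μ : ℝ)
    (hmodu : ∀ a ∈ Set.Icc (0:ℝ) 1, ∀ b ∈ Set.Icc (0:ℝ) 1, |a - b| < μ →
      |u a - u b| < δ ∧ |v a - v b| < δ)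
    (m m' : ℕ) (Z : Fin (m + 1) → ℝ) (Z' : Fin (m' + 1) → ℝ)
    (hZ : IsPartitionOf Z 1) (hZ' : IsPartitionOf Z' 1)
    (hZmesh : MeshLt Z μ)
    (hrefine : Set.range Z ⊆ Set.range Z') :
    S1sum F u v Z ≤ (1 + ε) * S1sum F u v Z' := by
  obtain ⟨hZmono, hZ0, hZ1⟩ := hZ
  obtain ⟨hZ'mono, hZ'0, hZ'1⟩ := hZ'
  choose φ hφ using fun j => hrefine (mem_range_self j)
  have hZ'mem : ∀ k, Z' k ∈ Icc (0:ℝ) 1 := fun k =>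
    ⟨hZ'0 ▸ hZ'mono.monotone k.zero_le, hZ'1 ▸ hZ'mono.monotone k.le_last⟩
  have hφmono : Monotone φ := fun i j hij =>
    hZ'mono.le_iff_le.mp (by simpa only [hφ] using hZmono.monotone hij)
  refine S1sum_le_mul_S1sum_of_refines F u v (1 + ε) hφmono
    (hZ'mono.injective (by rw [hφ, hZ0, hZ'0])) (hZ'mono.injective (by rw [hφ, hZ1, hZ'1])) hφ
    fun j k hjk hkj => ?_
  have hmesh := hZmesh j
  rw [← hφ, ← hφ] at hmesh
  rw [← hφ]
  exact frozen_increment_le (le_add_of_nonneg_right hε.1.le) hFmono hratio hu hv humaps hvmaps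
    hmodu (hZ'mem _) (hZ'mem _) (hZ'mono.monotone hjk) (hZ'mono.monotone k.castSucc_le_succ)
    (by linarith [hZ'mono.monotone hkj])

/-- Refinement-comparison estimate (step 5 of the existence proof). -/
theorem S1_refinement_comparison
    (F : ℝ → ℝ → ℝ)
    (hFmono : ∀ τ ∈ Set.Icc (0:ℝ) 1, MonotoneOn (fun t => F t τ) (Set.Icc (0:ℝ) 1))
    (ε δ : ℝ) (hε : ε ∈ Set.Ioo (0:ℝ) 1) (hδ : 0 < δ)
    (hratio : ∀ s s' τ τ' : ℝ, 0 ≤ s → s < s' → s' ≤ 1 → 0 ≤ τ → τ < τ' → τ' ≤ 1 →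
      s' - s < δ → τ' - τ < δ →
      F s' τ - F s τ ≤ (1 + ε) * (F s' τ' - F s τ'))
    (u v : ℝ → ℝ)
    (hu : MonotoneOn u (Set.Icc (0:ℝ) 1)) (hv : MonotoneOn v (Set.Icc (0:ℝ) 1))
    (humaps : MapsTo u (Set.Icc (0:ℝ) 1) (Set.Icc (0:ℝ) 1))
    (hvmaps : MapsTo v (Set.Icc (0:ℝ) 1) (Set.Icc (0:ℝ) 1))
    (μ : ℝ) (hμ : 0 < μ)
    (hmodu : ∀ a ∈ Set.Icc (0:ℝ) 1, ∀ b ∈ Set.Icc (0:ℝ) 1, |a - b| < μ →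
      |u a - u b| < δ ∧ |v a - v b| < δ)
    (m m' : ℕ) (Z : Fin (m + 1) → ℝ) (Z' : Fin (m' + 1) → ℝ)
    (hZ : IsPartitionOf Z 1) (hZ' : IsPartitionOf Z' 1)
    (hZmesh : MeshLt Z μ) (hZ'mesh : MeshLt Z' μ)
    (hrefine : Set.range Z ⊆ Set.range Z') :
    S1sum F u v Z ≤ (1 + ε) * S1sum F u v Z' :=
  S1_refinement_comparison_general F hFmono ε δ hε hratio u v hu hv humaps hvmaps μ hmodu m m' Z Z'
    hZ hZ' hZmesh hrefine
end
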